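/- Fix an integer $N \geq 1$ and let $\mathcal{R}$ denote the set of axis-parallel rectangles contained in $[0,1]^2$ whose corners lie in the lattice $\Lambda^{(N)} = \{k2^{-N} : 0 \le k \le 2^N\}^2$. For $1 \le n \le N$, let $\mathcal{T}^{(n)}$ be the set of rectangles with corners in $\Lambda^{(n)}$ and with side dimensions $2^{-n} \times k2^{-n}$ or $k2^{-n} \times 2^{-n}$ for some $1 \le k \le 2^n$ ('n-thin rectangles'). Then for every $r \in \mathcal{R}$ there exists a finite set $\mathfrak{t} \subset \bigcup_{n=1}^N \mathcal{T}^{(n)}$ that partitions $r$ (up to boundary overlaps of measure zero) and such that for every $\alpha \in (0,1]$ one has $\sum_{t \in \mathfrak{t}} |t|^\alpha \le C_\alpha\, |r|^\alpha$, where $|t|$ denotes the area of $t$ and $C_\alpha$ depends only on $\alpha$. -/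

import Mathlib

/-!
Each side `[a 2^{-N}, b 2^{-N}]` of `r` is covered, left to right, by dyadic intervals with at
most two of each level and none longer than the side: split off the (at most two) end cells of
level `N` outside the largest sub-interval with endpoints in `2^{1-N} ℤ`, and recurse.
For a side of length `ℓ` the sum of `|I|^α` is then dominated by the geometric series
`2 ∑_{2^{-k} ≤ ℓ} 2^{-kα} ≤ (2 + 2 / (2^α - 1)) ℓ^α`.
The products `I × J` of intervals of the two sides tile `r`; each is thin at level
`max k k'`, its shorter side having length `2^{-max k k'}`, and `(|I| |J|)^α` factorises, so
`C_α = (2 + 2 / (2^α - 1))²` works.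
-/

open MeasureTheory

/-- An axis-parallel rectangle in `[0,1]²` with corners in the dyadic lattice of mesh `2^{-n}`. -/
def IsDyadicRect (n : ℕ) (r : Set (ℝ × ℝ)) : Prop :=
  ∃ a b c d : ℕ, a < b ∧ c < d ∧ b ≤ 2 ^ n ∧ d ≤ 2 ^ n ∧
    r = Set.Icc ((a : ℝ) / 2 ^ n) ((b : ℝ) / 2 ^ n) ×ˢ
        Set.Icc ((c : ℝ) / 2 ^ n) ((d : ℝ) / 2 ^ n)

/-- An `n`-thin rectangle: corners in the lattice of mesh `2^{-n}` and one side of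
length exactly `2^{-n}`. -/
def IsThinRect (n : ℕ) (r : Set (ℝ × ℝ)) : Prop :=
  ∃ a b c d : ℕ, a < b ∧ c < d ∧ b ≤ 2 ^ n ∧ d ≤ 2 ^ n ∧ (b = a + 1 ∨ d = c + 1) ∧
    r = Set.Icc ((a : ℝ) / 2 ^ n) ((b : ℝ) / 2 ^ n) ×ˢ
        Set.Icc ((c : ℝ) / 2 ^ n) ((d : ℝ) / 2 ^ n)

namespace DyadicDecomposition

open Set Function

section Products

variable {α β ι κ : Type*}

theorem biUnion_finset_prod (s : Finset ι) (t : Finset κ) (f : ι → Set α) (g : κ → Set β) :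
    ⋃ x ∈ s ×ˢ t, f x.1 ×ˢ g x.2 = (⋃ i ∈ s, f i) ×ˢ ⋃ j ∈ t, g j := by
  ext
  simp only [mem_iUnion, Finset.mem_product, mem_prod, exists_prop, Prod.exists]
  tauto

theorem aedisjoint_prod [MeasurableSpace α] [MeasurableSpace β] {μ : Measure α} {ν : Measure β}
    [SFinite ν] {s s' : Set α} {t t' : Set β} (h : AEDisjoint μ s s' ∨ AEDisjoint ν t t') :
    AEDisjoint (μ.prod ν) (s ×ˢ t) (s' ×ˢ t') := by
  rw [AEDisjoint, prod_inter_prod, Measure.prod_prod]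
  rcases h with h | h
  · rw [h.eq, zero_mul]
  · rw [h.eq, mul_zero]

theorem aedisjoint_of_mem_image_prod [MeasurableSpace α] [MeasurableSpace β]
    [DecidableEq (Set (α × β))] {μ : Measure α} {ν : Measure β} [SFinite ν] {s : Finset ι}
    {t : Finset κ} {f : ι → Set α} {g : κ → Set β} (hs : (s : Set ι).Pairwise (AEDisjoint μ on f))
    (ht : (t : Set κ).Pairwise (AEDisjoint ν on g)) :
    ∀ u ∈ (s ×ˢ t).image (fun x => f x.1 ×ˢ g x.2),
      ∀ u' ∈ (s ×ˢ t).image (fun x => f x.1 ×ˢ g x.2), u ≠ u' → AEDisjoint (μ.prod ν) u u' := by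
  simp only [Finset.mem_image, Finset.mem_product]
  rintro _ ⟨x, hx, rfl⟩ _ ⟨y, hy, rfl⟩ hxy
  refine aedisjoint_prod ?_
  by_cases h1 : x.1 = y.1
  · exact .inr (ht hx.2 hy.2 fun h2 => hxy (by rw [h1, h2]))
  · exact .inl (hs hx.1 hy.1 h1)

variable [MeasureSpace α] [MeasureSpace β] [SFinite (volume : Measure β)]

theorem toReal_volume_prod (s : Set α) (t : Set β) :
    (volume (s ×ˢ t)).toReal = (volume s).toReal * (volume t).toReal := by
  rw [Measure.volume_eq_prod, Measure.prod_prod, ENNReal.toReal_mul]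

theorem sum_rpow_image_prod_le [DecidableEq (Set (α × β))] (s : Finset ι) (t : Finset κ)
    (f : ι → Set α) (g : κ → Set β) (r : ℝ) :
    ∑ u ∈ (s ×ˢ t).image (fun x => f x.1 ×ˢ g x.2), (volume u).toReal ^ r
      ≤ (∑ i ∈ s, (volume (f i)).toReal ^ r) * ∑ j ∈ t, (volume (g j)).toReal ^ r := by
  refine (Finset.sum_image_le_of_nonneg fun _ _ => by positivity).trans_eq ?_
  simp_rw [toReal_volume_prod, Real.mul_rpow ENNReal.toReal_nonneg ENNReal.toReal_nonneg]
  rw [Finset.sum_product, Finset.sum_mul_sum]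

end Products

theorem two_add_two_div_sub_one_ne_zero {x : ℝ} (hx : x ≠ 0) : 2 + 2 / (x - 1) ≠ 0 := by
  rcases eq_or_ne x 1 with rfl | hx1
  · norm_num -- `2 / 0 = 0`
  · rw [add_div' _ _ _ (sub_ne_zero.2 hx1), show 2 * (x - 1) + 2 = 2 * x by ring]
    exact div_ne_zero (mul_ne_zero two_ne_zero hx) (sub_ne_zero.2 hx1)

theorem two_div_two_rpow_sub_one_nonneg {α : ℝ} (hα : 0 ≤ α) : 0 ≤ 2 / ((2 : ℝ) ^ α - 1) :=
  div_nonneg zero_le_two (sub_nonneg.2 (Real.one_le_rpow one_le_two hα))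

theorem two_div_two_rpow_sub_one_mul {α : ℝ} (hα : 0 < α) :
    2 / (2 ^ α - 1) * (2 : ℝ) ^ α = 2 / (2 ^ α - 1) + 2 := by
  have : (2 : ℝ) ^ α - 1 ≠ 0 := (sub_pos.2 (Real.one_lt_rpow one_lt_two hα)).ne'
  field_simp
  ring

/-- The dyadic interval `[j 2^{-k}, (j + 1) 2^{-k}]`, indexed by `p = (k, j)`. -/
def dyadicInterval (p : ℕ × ℕ) : Set ℝ :=
  Icc ((p.2 : ℝ) / 2 ^ p.1) ((p.2 + 1 : ℝ) / 2 ^ p.1)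

theorem toReal_volume_dyadicInterval (p : ℕ × ℕ) :
    (volume (dyadicInterval p)).toReal = ((2 : ℝ) ^ p.1)⁻¹ := by
  rw [dyadicInterval, Real.volume_Icc, ← sub_div, add_sub_cancel_left, one_div,
    ENNReal.toReal_ofReal (by positivity)]

theorem dyadicInterval_eq_Icc_of_le {p : ℕ × ℕ} {K : ℕ} (h : p.1 ≤ K) :
    dyadicInterval p = Icc (((p.2 * 2 ^ (K - p.1) : ℕ) : ℝ) / 2 ^ K)
      ((((p.2 + 1) * 2 ^ (K - p.1) : ℕ) : ℝ) / 2 ^ K) := by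
  have hK : (2 : ℝ) ^ K = 2 ^ p.1 * 2 ^ (K - p.1) := by rw [← pow_add, Nat.add_sub_cancel' h]
  simp only [dyadicInterval, hK, Nat.cast_mul, Nat.cast_pow, Nat.cast_ofNat, Nat.cast_add,
    Nat.cast_one, mul_div_mul_right _ _ (pow_ne_zero _ two_ne_zero : (2 : ℝ) ^ (K - p.1) ≠ 0)]

theorem isThinRect_dyadicInterval_prod {p q : ℕ × ℕ} (hp : p.2 < 2 ^ p.1) (hq : q.2 < 2 ^ q.1) :
    IsThinRect (max p.1 q.1) (dyadicInterval p ×ˢ dyadicInterval q) := by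
  set K := max p.1 q.1
  have hpK : p.1 ≤ K := le_max_left _ _
  have hqK : q.1 ≤ K := le_max_right _ _
  have hle : ∀ r : ℕ × ℕ, r.2 < 2 ^ r.1 → r.1 ≤ K → (r.2 + 1) * 2 ^ (K - r.1) ≤ 2 ^ K :=
    fun r hr hrK => calc
      _ ≤ 2 ^ r.1 * 2 ^ (K - r.1) := Nat.mul_le_mul_right _ hr
      _ = 2 ^ K := by rw [← pow_add, Nat.add_sub_cancel' hrK]
  refine ⟨p.2 * 2 ^ (K - p.1), (p.2 + 1) * 2 ^ (K - p.1), q.2 * 2 ^ (K - q.1),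
    (q.2 + 1) * 2 ^ (K - q.1), by gcongr; omega, by gcongr; omega, hle p hp hpK, hle q hq hqK,
    ?_, by rw [dyadicInterval_eq_Icc_of_le hpK, dyadicInterval_eq_Icc_of_le hqK]⟩
  obtain hK | hK : K = p.1 ∨ K = q.1 := max_choice _ _
  · left; rw [hK, Nat.sub_self]; ring
  · right; rw [hK, Nat.sub_self]; ring

/-- `l` lists, from left to right, dyadic intervals of levels in `[1, N]` that tile
`[a 2^{-N}, b 2^{-N}]`. -/
def IsDyadicTiling (N : ℕ) : ℕ → ℕ → List (ℕ × ℕ) → Prop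
  | a, b, [] => a = b
  | a, b, p :: l =>
    0 < p.1 ∧ p.1 ≤ N ∧ p.2 * 2 ^ (N - p.1) = a ∧ IsDyadicTiling N (a + 2 ^ (N - p.1)) b l

namespace IsDyadicTiling

variable {N a b c : ℕ} {l l' : List (ℕ × ℕ)}

theorem append (h : IsDyadicTiling N a c l) (h' : IsDyadicTiling N c b l') :
    IsDyadicTiling N a b (l ++ l') := by
  induction l generalizing a with
  | nil => exact (show a = c from h) ▸ h'
  | cons p l ih => exact ⟨h.1, h.2.1, h.2.2.1, ih h.2.2.2⟩

theorem double (h : IsDyadicTiling N a b l) : IsDyadicTiling (N + 1) (2 * a) (2 * b) l := by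
  induction l generalizing a with
  | nil => exact congrArg (2 * ·) h
  | cons p l ih =>
    obtain ⟨hp, hpN, hpa, hl⟩ := h
    have hexp : 2 ^ (N + 1 - p.1) = 2 * 2 ^ (N - p.1) := by
      rw [Nat.sub_add_comm hpN, pow_succ, mul_comm]
    refine ⟨hp, hpN.trans N.le_succ, ?_, ?_⟩
    · rw [hexp, ← hpa]; ring
    · rw [hexp, ← mul_add]; exact ih hl

theorem le (h : IsDyadicTiling N a b l) : a ≤ b := by
  induction l generalizing a with
  | nil => exact (show a = b from h).le
  | cons p l ih => exact (Nat.le_add_right _ _).trans (ih h.2.2.2)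

theorem bounds_of_mem (h : IsDyadicTiling N a b l) {p : ℕ × ℕ} (hp : p ∈ l) :
    0 < p.1 ∧ p.1 ≤ N ∧ (p.2 + 1) * 2 ^ (N - p.1) ≤ b := by
  induction l generalizing a with
  | nil => cases hp
  | cons q l ih =>
    obtain ⟨hq, hqN, hqa, hl⟩ := h
    rcases List.mem_cons.1 hp with rfl | hp
    · exact ⟨hq, hqN, by rw [add_one_mul, hqa]; exact hl.le⟩
    · exact ih hl hp

theorem biUnion_eq (h : IsDyadicTiling N a b l) (hl : l ≠ []) :
    ⋃ p ∈ l, dyadicInterval p = Icc ((a : ℝ) / 2 ^ N) ((b : ℝ) / 2 ^ N) := by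
  induction l generalizing a with
  | nil => exact absurd rfl hl
  | cons p l ih =>
    obtain ⟨-, hpN, hpa, hl'⟩ := h
    have hp : dyadicInterval p = Icc ((a : ℝ) / 2 ^ N) (((a + 2 ^ (N - p.1) : ℕ) : ℝ) / 2 ^ N) := by
      rw [dyadicInterval_eq_Icc_of_le hpN, add_mul, one_mul, hpa]
    simp only [List.mem_cons, iUnion_iUnion_eq_or_left]
    rcases eq_or_ne l [] with rfl | hl
    · obtain rfl : a + 2 ^ (N - p.1) = b := hl'
      simp [hp]
    · rw [hp, ih hl' hl, Icc_union_Icc_eq_Icc]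
      · gcongr; exact_mod_cast Nat.le_add_right _ _
      · gcongr; exact_mod_cast hl'.le

theorem pairwise_aedisjoint (h : IsDyadicTiling N a b l) :
    l.Pairwise (AEDisjoint volume on dyadicInterval) := by
  induction l generalizing a with
  | nil => exact List.Pairwise.nil
  | cons p l ih =>
    obtain ⟨-, hpN, hpa, hl⟩ := h
    refine List.pairwise_cons.2 ⟨fun q hq => ?_, ih hl⟩
    set x : ℝ := ((a + 2 ^ (N - p.1) : ℕ) : ℝ) / 2 ^ N
    have hp : dyadicInterval p ⊆ Iic x := by
      rw [dyadicInterval_eq_Icc_of_le hpN, add_one_mul, hpa]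
      exact Icc_subset_Iic_self
    have hq' : dyadicInterval q ⊆ Ici x := by
      refine (subset_iUnion₂ (s := fun r (_ : r ∈ l) => dyadicInterval r) q hq).trans ?_
      rw [hl.biUnion_eq (List.ne_nil_of_mem hq)]
      exact Icc_subset_Ici_self
    refine measure_mono_null (fun y hy => ?_) (Real.volume_singleton (a := x))
    exact le_antisymm (hp hy.1) (hq' hy.2)

theorem nodup (h : IsDyadicTiling N a b l) : l.Nodup :=
  h.pairwise_aedisjoint.imp fun {p _} hpq hp => by
    subst hp
    have hvol := toReal_volume_dyadicInterval p
    rw [← inter_self (dyadicInterval p), show volume _ = 0 from hpq, ENNReal.toReal_zero] at hvol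
    exact (inv_pos.2 (pow_pos two_pos _)).ne hvol

end IsDyadicTiling

def dyadicUnits (n a b : ℕ) : List (ℕ × ℕ) :=
  (List.range' a (b - a)).map (n, ·)

/-- The cells of level `n` outside `[⌈a/2⌉ 2^{1-n}, ⌊b/2⌋ 2^{1-n}]`, and recursively a cover of
that interval; at level `1` only cells are used, so that no interval is all of `[0, 1]`. -/
def dyadicCover : ℕ → ℕ → ℕ → List (ℕ × ℕ)
  | 0, _, _ => []
  | 1, a, b => dyadicUnits 1 a b
  | n + 2, a, b =>
    if b ≤ a then []
    else dyadicUnits (n + 2) a (2 * ((a + 1) / 2)) ++ dyadicCover (n + 1) ((a + 1) / 2) (b / 2) ++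
      dyadicUnits (n + 2) (2 * (b / 2)) b

theorem isDyadicTiling_dyadicUnits {N a b : ℕ} (hN : 0 < N) (hab : a ≤ b) :
    IsDyadicTiling N a b (dyadicUnits N a b) := by
  obtain ⟨m, rfl⟩ := Nat.exists_eq_add_of_le hab
  rw [dyadicUnits, Nat.add_sub_cancel_left]
  clear hab
  induction m generalizing a with
  | zero => rfl
  | succ m ih => exact ⟨hN, le_rfl, by simp, by simpa [add_assoc, add_comm 1] using ih (a := a + 1)⟩

theorem isDyadicTiling_dyadicCover : ∀ {n a b : ℕ}, 0 < n → a ≤ b →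
    IsDyadicTiling n a b (dyadicCover n a b)
  | 1, _, _, hn, hab => isDyadicTiling_dyadicUnits hn hab
  | n + 2, a, b, hn, hab => by
    rw [dyadicCover]
    split_ifs with hba
    · exact le_antisymm hab hba
    · refine ((isDyadicTiling_dyadicUnits hn (by omega)).append ?_).append
        (isDyadicTiling_dyadicUnits hn (by omega))
      exact (isDyadicTiling_dyadicCover n.succ_pos (by omega)).double

theorem dyadicCover_of_le : ∀ {n a b : ℕ}, b ≤ a → dyadicCover n a b = []
  | 0, _, _, _ => rfl
  | 1, _, _, h => by simp [dyadicCover, dyadicUnits, Nat.sub_eq_zero_of_le h]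
  | _ + 2, _, _, h => if_pos h

theorem sum_map_dyadicUnits (α : ℝ) (n a b : ℕ) :
    ((dyadicUnits n a b).map fun p => ((2 : ℝ) ^ p.1)⁻¹ ^ α).sum
      = (b - a : ℕ) * ((2 : ℝ) ^ n)⁻¹ ^ α := by
  simp [dyadicUnits, Function.comp_def]

theorem sum_map_dyadicCover_add_two (α : ℝ) (n : ℕ) {a b : ℕ} (hab : a < b) :
    ((dyadicCover (n + 2) a b).map fun p => ((2 : ℝ) ^ p.1)⁻¹ ^ α).sum
      = (((2 * ((a + 1) / 2) - a : ℕ) : ℝ) + (b - 2 * (b / 2) : ℕ)) * ((2 : ℝ) ^ (n + 2))⁻¹ ^ α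
        + ((dyadicCover (n + 1) ((a + 1) / 2) (b / 2)).map fun p => ((2 : ℝ) ^ p.1)⁻¹ ^ α).sum := by
  rw [dyadicCover, if_neg (by omega)]
  simp only [List.map_append, List.sum_append, sum_map_dyadicUnits]
  ring

theorem half_length_le (n a b : ℕ) :
    (((b / 2 : ℕ) : ℝ) - ((a + 1) / 2 : ℕ)) / 2 ^ (n + 1) ≤ ((b : ℝ) - a) / 2 ^ (n + 2) := by
  rw [pow_succ _ (n + 1), ← div_div, le_div_iff₀ two_pos, div_mul_eq_mul_div,
    div_le_div_iff_of_pos_right (by positivity)]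
  have hb : ((b / 2 : ℕ) : ℝ) * 2 ≤ b := by exact_mod_cast (by omega : b / 2 * 2 ≤ b)
  have ha : (a : ℝ) ≤ ((a + 1) / 2 : ℕ) * 2 := by exact_mod_cast (by omega : a ≤ (a + 1) / 2 * 2)
  linarith

theorem inv_two_pow_rpow_eq_mul_succ (α : ℝ) (n : ℕ) :
    ((2 : ℝ) ^ n)⁻¹ ^ α = 2 ^ α * ((2 : ℝ) ^ (n + 1))⁻¹ ^ α := by
  rw [← Real.mul_rpow zero_le_two (by positivity), pow_succ]
  congr 1
  field_simp

theorem inv_two_pow_rpow_le_length_rpow {α : ℝ} (hα : 0 < α) (n : ℕ) {a b : ℕ} (hab : a < b) :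
    ((2 : ℝ) ^ n)⁻¹ ^ α ≤ (((b : ℝ) - a) / 2 ^ n) ^ α := by
  refine Real.rpow_le_rpow (by positivity) ?_ hα.le
  rw [inv_eq_one_div]
  gcongr
  rw [le_sub_iff_add_le]
  exact_mod_cast (by omega : 1 + a ≤ b)

/-- The extra term `2 / (2^α - 1) · 2^{-nα} = 2 ∑_{k > n} 2^{-kα}` makes the induction go
through. -/
theorem sum_rpow_dyadicCover_add_le {α : ℝ} (hα : 0 < α) :
    ∀ {n a b : ℕ}, 0 < n → a < b → b ≤ 2 ^ n →
      ((dyadicCover n a b).map fun p => ((2 : ℝ) ^ p.1)⁻¹ ^ α).sum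
          + 2 / (2 ^ α - 1) * ((2 : ℝ) ^ n)⁻¹ ^ α
        ≤ (2 + 2 / (2 ^ α - 1)) * (((b : ℝ) - a) / 2 ^ n) ^ α
  | 1, a, b, _, hab, hb => by
    have hd := two_div_two_rpow_sub_one_nonneg hα.le
    rw [dyadicCover, sum_map_dyadicUnits, Nat.cast_sub hab.le]
    have hh : ((2 : ℝ) ^ 1)⁻¹ ^ α ≤ 1 := Real.rpow_le_one (by positivity) (by norm_num) hα.le
    obtain hba | hba : (b : ℝ) - a = 1 ∨ (b : ℝ) - a = 2 := by
      rcases (by omega : b = a + 1 ∨ b = a + 2) with rfl | rfl <;> [left; right] <;>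
        push_cast <;> ring
    · rw [hba, one_div]; nlinarith [Real.rpow_nonneg (inv_nonneg.2 (pow_nonneg zero_le_two 1)) α]
    · rw [hba, pow_one, div_self two_ne_zero, Real.one_rpow]; nlinarith
  | n + 2, a, b, _, hab, hb => by
    set d := 2 / ((2 : ℝ) ^ α - 1)
    set h := ((2 : ℝ) ^ (n + 2))⁻¹ ^ α
    set S := ((dyadicCover (n + 1) ((a + 1) / 2) (b / 2)).map fun p => ((2 : ℝ) ^ p.1)⁻¹ ^ α).sum
    have hd : 0 ≤ d := two_div_two_rpow_sub_one_nonneg hα.le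
    have hends : ((2 * ((a + 1) / 2) - a : ℕ) : ℝ) + (b - 2 * (b / 2) : ℕ) ≤ 2 := by
      norm_cast; omega
    have hx := inv_two_pow_rpow_le_length_rpow hα (n + 2) hab
    rw [sum_map_dyadicCover_add_two α n hab]
    rcases (by omega : (a + 1) / 2 < b / 2 ∨ b / 2 ≤ (a + 1) / 2) with hlt | hle
    · have ih := sum_rpow_dyadicCover_add_le hα n.succ_pos hlt
        (Nat.div_le_of_le_mul (by rwa [← pow_succ']))
      have hH := inv_two_pow_rpow_eq_mul_succ α (n + 1)
      calc (((2 * ((a + 1) / 2) - a : ℕ) : ℝ) + (b - 2 * (b / 2) : ℕ)) * h + S + d * h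
          ≤ 2 * h + S + d * h := by gcongr
        _ = S + d * (2 ^ α * h) := by rw [← mul_assoc, two_div_two_rpow_sub_one_mul hα]; ring
        _ ≤ (2 + d) * ((((b / 2 : ℕ) : ℝ) - ((a + 1) / 2 : ℕ)) / 2 ^ (n + 1)) ^ α := hH ▸ ih
        _ ≤ (2 + d) * (((b : ℝ) - a) / 2 ^ (n + 2)) ^ α := by
          refine mul_le_mul_of_nonneg_left (Real.rpow_le_rpow ?_ (half_length_le n a b) hα.le)
            (by positivity)
          exact div_nonneg (sub_nonneg.2 (by exact_mod_cast hlt.le)) (by positivity)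
    · calc (((2 * ((a + 1) / 2) - a : ℕ) : ℝ) + (b - 2 * (b / 2) : ℕ)) * h + S + d * h
          ≤ 2 * h + 0 + d * h := by gcongr; simp [S, dyadicCover_of_le hle]
        _ ≤ (2 + d) * (((b : ℝ) - a) / 2 ^ (n + 2)) ^ α := by nlinarith

theorem exists_dyadicPartition_Icc {N a b : ℕ} (hN : 0 < N) (hab : a < b) (hb : b ≤ 2 ^ N) :
    ∃ s : Finset (ℕ × ℕ), (∀ p ∈ s, 0 < p.1 ∧ p.1 ≤ N ∧ p.2 < 2 ^ p.1) ∧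
      ⋃ p ∈ s, dyadicInterval p = Icc ((a : ℝ) / 2 ^ N) ((b : ℝ) / 2 ^ N) ∧
      (s : Set (ℕ × ℕ)).Pairwise (AEDisjoint volume on dyadicInterval) ∧
      ∀ α : ℝ, 0 < α → ∑ p ∈ s, (volume (dyadicInterval p)).toReal ^ α ≤
        (2 + 2 / (2 ^ α - 1)) * (volume (Icc ((a : ℝ) / 2 ^ N) ((b : ℝ) / 2 ^ N))).toReal ^ α := by
  classical
  have h := isDyadicTiling_dyadicCover hN hab.le
  refine ⟨(dyadicCover N a b).toFinset, fun p hp => ?_, ?_, ?_, fun α hα => ?_⟩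
  · obtain ⟨hp, hpN, hpb⟩ := h.bounds_of_mem (List.mem_toFinset.1 hp)
    refine ⟨hp, hpN, Nat.lt_of_succ_le (Nat.le_of_mul_le_mul_right ?_ (Nat.two_pow_pos (N - p.1)))⟩
    rw [← pow_add, Nat.add_sub_cancel' hpN]
    exact hpb.trans hb
  · simp only [List.mem_toFinset]
    refine h.biUnion_eq fun hl => ?_
    rw [hl] at h
    exact hab.ne h
  · have : Std.Symm (AEDisjoint volume on dyadicInterval) := ⟨fun _ _ => AEDisjoint.symm⟩
    rw [List.coe_toFinset]
    exact h.pairwise_aedisjoint.set_pairwise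
  · rw [List.sum_toFinset _ h.nodup, Real.volume_Icc,
      ENNReal.toReal_ofReal (by rw [sub_nonneg]; gcongr), ← sub_div]
    simp only [toReal_volume_dyadicInterval]
    have htail : 0 ≤ 2 / ((2 : ℝ) ^ α - 1) * ((2 : ℝ) ^ N)⁻¹ ^ α :=
      mul_nonneg (two_div_two_rpow_sub_one_nonneg hα.le) (by positivity)
    linarith [sum_rpow_dyadicCover_add_le hα hN hab hb]

end DyadicDecomposition

open DyadicDecomposition in
/-- every dyadic rectangle can be partitioned (up to boundary overlaps of
measure zero) into thin rectangles whose `α`-th powers of areas sum to at most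
`C_α` times the `α`-th power of the area of the rectangle, with `C_α` depending
only on `α` (uniformly in `N` and `r`). -/
theorem dyadic_rect_decomposition :
    ∃ C : ℝ → ℝ, (∀ α : ℝ, 0 < C α) ∧
      ∀ N : ℕ, 1 ≤ N → ∀ r : Set (ℝ × ℝ), IsDyadicRect N r →
        ∃ 𝔱 : Finset (Set (ℝ × ℝ)),
          (∀ t ∈ 𝔱, ∃ n : ℕ, 1 ≤ n ∧ n ≤ N ∧ IsThinRect n t) ∧
          (⋃ t ∈ 𝔱, t) = r ∧
          (∀ t ∈ 𝔱, ∀ t' ∈ 𝔱, t ≠ t' → volume (t ∩ t') = 0) ∧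
          ∀ α : ℝ, 0 < α → α ≤ 1 →
            ∑ t ∈ 𝔱, (volume t).toReal ^ α ≤ C α * (volume r).toReal ^ α := by
  classical
  refine ⟨fun α => (2 + 2 / (2 ^ α - 1)) ^ 2, fun α => sq_pos_of_ne_zero
    (two_add_two_div_sub_one_ne_zero (Real.rpow_pos_of_pos two_pos α).ne'), ?_⟩
  rintro N hN r ⟨a, b, c, d, hab, hcd, hb, hd, rfl⟩
  obtain ⟨s, hs, hs_union, hs_disj, hs_sum⟩ := exists_dyadicPartition_Icc hN hab hb
  obtain ⟨t, ht, ht_union, ht_disj, ht_sum⟩ := exists_dyadicPartition_Icc hN hcd hd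
  refine ⟨(s ×ˢ t).image fun x => dyadicInterval x.1 ×ˢ dyadicInterval x.2, ?_, ?_,
    fun u hu u' hu' huu' => ?_, fun α hα _ => ?_⟩
  · simp only [Finset.mem_image, Finset.mem_product]
    rintro _ ⟨⟨p, q⟩, ⟨hp, hq⟩, rfl⟩
    obtain ⟨hp0, hpN, hp⟩ := hs p hp
    obtain ⟨-, hqN, hq⟩ := ht q hq
    exact ⟨max p.1 q.1, hp0.trans_le (le_max_left _ _), max_le hpN hqN,
      isThinRect_dyadicInterval_prod hp hq⟩
  · rw [Finset.set_biUnion_finset_image, biUnion_finset_prod, hs_union, ht_union]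
  · rw [Measure.volume_eq_prod]
    exact aedisjoint_of_mem_image_prod hs_disj ht_disj u hu u' hu' huu'
  · calc _ ≤ _ := sum_rpow_image_prod_le s t dyadicInterval dyadicInterval α
      _ ≤ _ := mul_le_mul (hs_sum α hα) (ht_sum α hα) (Finset.sum_nonneg fun _ _ => by positivity)
            (mul_nonneg (add_nonneg zero_le_two (two_div_two_rpow_sub_one_nonneg hα.le))
              (by positivity))
      _ = _ := by
          rw [toReal_volume_prod, Real.mul_rpow ENNReal.toReal_nonneg ENNReal.toReal_nonneg]
          ring
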